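/- Fix n ≥ 1 and work in ℝⁿ with Lebesgue measure; |x| denotes the Euclidean norm. Let K : ℝⁿ → [0,∞) be a radial measurable kernel, i.e., K(x) = K̃(|x|) for some K̃ : [0,∞) → [0,∞). Then the cell energy b is the same for all halfspaces: for any ν₁, ν₂ ∈ ℝⁿ∖{0} one has b(H_{ν₁}) = b(H_{ν₂}). -/

import Mathlib

open MeasureTheory Set Filter Metric
open scoped ENNReal Topology

/-- The halfspace with inner normal `ν`. -/
def halfspace {n : ℕ} (ν : EuclideanSpace ℝ (Fin n)) : Set (EuclideanSpace ℝ (Fin n)) :=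
  {x | 0 ≤ (inner ℝ x ν : ℝ)}

/-- The rescaled interaction energy
`J¹_ε(E;B(0,1)) = ∫_B ∫_B K_ε(x−y)|χ_E(x)−χ_E(y)| dx dy` with `K_ε(x) = ε^{-n}K(x/ε)`. -/
noncomputable def J1 {n : ℕ} (K : EuclideanSpace ℝ (Fin n) → ℝ) (ε : ℝ)
    (E : Set (EuclideanSpace ℝ (Fin n))) : ℝ≥0∞ :=
  ∫⁻ x in ball (0 : EuclideanSpace ℝ (Fin n)) 1,
    ∫⁻ y in ball (0 : EuclideanSpace ℝ (Fin n)) 1,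
      ENNReal.ofReal ((ε ^ n)⁻¹ * K (ε⁻¹ • (x - y)))
        * ENNReal.ofReal
            |E.indicator (fun _ => (1:ℝ)) x - E.indicator (fun _ => (1:ℝ)) y|

/-- The cell energy `b(H)`: the infimum of `liminf (1/(2ε_j)) J¹_{ε_j}(E_j;B(0,1))` over
all sequences `ε_j → 0⁺` and all sequences of sets `E_j` with `χ_{E_j} → χ_H` in
`L¹(B(0,1))`. -/
noncomputable def cellEnergy {n : ℕ} (K : EuclideanSpace ℝ (Fin n) → ℝ)
    (H : Set (EuclideanSpace ℝ (Fin n))) : ℝ≥0∞ :=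
  sInf {c : ℝ≥0∞ | ∃ (ε : ℕ → ℝ) (E : ℕ → Set (EuclideanSpace ℝ (Fin n))),
    (∀ j, 0 < ε j) ∧ Tendsto ε atTop (𝓝 0) ∧
    Tendsto (fun j => ∫ x in ball (0 : EuclideanSpace ℝ (Fin n)) 1,
        |(E j).indicator (fun _ => (1:ℝ)) x - H.indicator (fun _ => (1:ℝ)) x|)
      atTop (𝓝 0) ∧
    c = liminf (fun j => (ENNReal.ofReal (2 * ε j))⁻¹ * J1 K (ε j) (E j)) atTop}

/-! A radial kernel is invariant under every linear isometry `R`, and so are Lebesgue measure and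
the unit ball. Pulling a competitor `(ε_j, E_j)` for `H` back along `R` therefore gives a
competitor for `R ⁻¹' H` with the same `L¹` distances and the same energies, so the cell energy is
invariant under isometries. Any two halfspaces are related by a reflection: it suffices to map
`‖ν₂‖ • ν₁` to `‖ν₁‖ • ν₂`, two vectors of equal length. -/

theorem Set.indicator_preimage_const_apply {α β M : Type*} [Zero M] (f : α → β) (S : Set β)
    (c : M) (x : α) : (f ⁻¹' S).indicator (fun _ => c) x = S.indicator (fun _ => c) (f x) :=
  indicator_comp_right (g := fun _ => c) f

section IsometryInvariance

variable {E : Type*} [NormedAddCommGroup E] [InnerProductSpace ℝ E] [FiniteDimensional ℝ E]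
  [MeasurableSpace E] [BorelSpace E]

theorem LinearIsometryEquiv.setLIntegral_ball_zero_comp (R : E ≃ₗᵢ[ℝ] E) (r : ℝ)
    (g : E → ℝ≥0∞) : ∫⁻ x in ball 0 r, g (R x) = ∫⁻ x in ball 0 r, g x := by
  conv_lhs => rw [← map_zero R.symm, ← R.preimage_ball]
  exact R.measurePreserving.setLIntegral_comp_preimage_emb
    R.toHomeomorph.measurableEmbedding g _

theorem LinearIsometryEquiv.setLIntegral_ball_zero_comp₂ (R : E ≃ₗᵢ[ℝ] E) (r : ℝ)
    (F : E → E → ℝ≥0∞) :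
    ∫⁻ x in ball 0 r, ∫⁻ y in ball 0 r, F (R x) (R y) = ∫⁻ x in ball 0 r, ∫⁻ y in ball 0 r, F x y :=
  (lintegral_congr fun x => R.setLIntegral_ball_zero_comp r (F (R x))).trans
    (R.setLIntegral_ball_zero_comp r fun x => ∫⁻ y in ball 0 r, F x y)

theorem LinearIsometryEquiv.setIntegral_ball_zero_comp (R : E ≃ₗᵢ[ℝ] E) (r : ℝ)
    (g : E → ℝ) : ∫ x in ball 0 r, g (R x) = ∫ x in ball 0 r, g x := by
  conv_lhs => rw [← map_zero R.symm, ← R.preimage_ball]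
  exact R.measurePreserving.setIntegral_preimage_emb R.toHomeomorph.measurableEmbedding g _

end IsometryInvariance

section Halfspace

variable {n : ℕ}

theorem halfspace_smul_of_pos (ν : EuclideanSpace ℝ (Fin n)) {c : ℝ} (hc : 0 < c) :
    halfspace (c • ν) = halfspace ν := by
  ext x
  simp only [halfspace, mem_ofPred_eq, real_inner_smul_right, mul_nonneg_iff_of_pos_left hc]

theorem LinearIsometryEquiv.preimage_halfspace
    (R : EuclideanSpace ℝ (Fin n) ≃ₗᵢ[ℝ] EuclideanSpace ℝ (Fin n)) (ν : EuclideanSpace ℝ (Fin n)) :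
    R ⁻¹' halfspace (R ν) = halfspace ν := by
  ext x
  simp only [halfspace, mem_preimage, mem_ofPred_eq, R.inner_map_map]

theorem exists_linearIsometryEquiv_preimage_halfspace {ν₁ ν₂ : EuclideanSpace ℝ (Fin n)}
    (hν₁ : ν₁ ≠ 0) (hν₂ : ν₂ ≠ 0) :
    ∃ R : EuclideanSpace ℝ (Fin n) ≃ₗᵢ[ℝ] EuclideanSpace ℝ (Fin n),
      R ⁻¹' halfspace ν₂ = halfspace ν₁ := by
  have hnorm : ‖‖ν₂‖ • ν₁‖ = ‖‖ν₁‖ • ν₂‖ := by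
    simp only [norm_smul, norm_norm, mul_comm]
  set R := Submodule.reflection (ℝ ∙ (‖ν₂‖ • ν₁ - ‖ν₁‖ • ν₂))ᗮ
  have hR : R (‖ν₂‖ • ν₁) = ‖ν₁‖ • ν₂ := Submodule.reflection_sub hnorm
  refine ⟨R, ?_⟩
  rw [← halfspace_smul_of_pos ν₂ (norm_pos_iff.2 hν₁), ← hR, R.preimage_halfspace,
    halfspace_smul_of_pos ν₁ (norm_pos_iff.2 hν₂)]

end Halfspace

section CellEnergy

variable {n : ℕ} {K : EuclideanSpace ℝ (Fin n) → ℝ}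
  (R : EuclideanSpace ℝ (Fin n) ≃ₗᵢ[ℝ] EuclideanSpace ℝ (Fin n))

theorem J1_preimage_linearIsometryEquiv (hK : ∀ x, K (R x) = K x) (ε : ℝ)
    (S : Set (EuclideanSpace ℝ (Fin n))) : J1 K ε (R ⁻¹' S) = J1 K ε S := by
  unfold J1
  conv_rhs => rw [← R.setLIntegral_ball_zero_comp₂]
  simp only [indicator_preimage_const_apply, ← map_sub, ← map_smul, hK]

theorem cellEnergy_preimage_le (hK : ∀ x, K (R x) = K x) (H : Set (EuclideanSpace ℝ (Fin n))) :
    cellEnergy K (R ⁻¹' H) ≤ cellEnergy K H := by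
  refine sInf_le_sInf ?_
  rintro c ⟨ε, S, hpos, hε, hconv, rfl⟩
  refine ⟨ε, fun j => R ⁻¹' S j, hpos, hε, ?_, ?_⟩
  · convert hconv using 2 with j
    simp only [indicator_preimage_const_apply]
    exact R.setIntegral_ball_zero_comp 1
      (fun x => |(S j).indicator (fun _ => (1 : ℝ)) x - H.indicator (fun _ => (1 : ℝ)) x|)
  · simp only [J1_preimage_linearIsometryEquiv R hK]

theorem cellEnergy_preimage_linearIsometryEquiv (hK : ∀ x, K (R x) = K x)
    (H : Set (EuclideanSpace ℝ (Fin n))) : cellEnergy K (R ⁻¹' H) = cellEnergy K H := by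
  refine le_antisymm (cellEnergy_preimage_le R hK H) ?_
  have hK' : ∀ x, K (R.symm x) = K x := fun x => by rw [← hK, R.apply_symm_apply]
  simpa [← preimage_comp] using cellEnergy_preimage_le R.symm hK' (R ⁻¹' H)

end CellEnergy

theorem cellEnergy_radial_invariant_general (n : ℕ)
    (K : EuclideanSpace ℝ (Fin n) → ℝ) (Ktilde : ℝ → ℝ)
    (hKrad : ∀ x, K x = Ktilde ‖x‖)
    (ν₁ ν₂ : EuclideanSpace ℝ (Fin n)) (hν₁ : ν₁ ≠ 0) (hν₂ : ν₂ ≠ 0) :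
    cellEnergy K (halfspace ν₁) = cellEnergy K (halfspace ν₂) := by
  obtain ⟨R, hR⟩ := exists_linearIsometryEquiv_preimage_halfspace hν₁ hν₂
  have hK : ∀ x, K (R x) = K x := fun x => by rw [hKrad, hKrad, R.norm_map]
  rw [← hR, cellEnergy_preimage_linearIsometryEquiv R hK]

/-- For a radial kernel, the cell energy does not depend on the halfspace. -/
theorem cellEnergy_radial_invariant (n : ℕ) (hn : 1 ≤ n)
    (K : EuclideanSpace ℝ (Fin n) → ℝ) (Ktilde : ℝ → ℝ)
    (hKrad : ∀ x, K x = Ktilde ‖x‖)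
    (ν₁ ν₂ : EuclideanSpace ℝ (Fin n)) (hν₁ : ν₁ ≠ 0) (hν₂ : ν₂ ≠ 0) :
    cellEnergy K (halfspace ν₁) = cellEnergy K (halfspace ν₂) :=
  cellEnergy_radial_invariant_general n K Ktilde hKrad ν₁ ν₂ hν₁ hν₂
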